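/- arXiv:1402.1618 — 3 statements merged into one kernel-verified Lean document; each statement's English description precedes it below -/
import Mathlib

section
/- Let G and M be compact second countable groups and suppose there exist an m_G-conull Borel set X ⊆ G, an (m_G × m_G)-conull Borel set Z ⊆ X × X, and Borel measurable maps α, β : X → M such that α(x)β(y) = α(x')β(y') whenever (x,y) and (x',y') belong to Z and satisfy xy = x'y'. Then there exist a continuous homomorphism π : G → M and elements s, t ∈ M such that α(x) = s·π(x) for m_G-almost every x ∈ G and β(y) = π(y)·t for m_G-almost every y ∈ G. -/
noncomputable section

/-- A compact group `S` together with a continuous surjective homomorphism onto `L`. -/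
structure CompactGroupOver (L : Type*) [Group L] [TopologicalSpace L] where
  S : Type
  [grp : Group S]
  [top : TopologicalSpace S]
  [tgrp : IsTopologicalGroup S]
  [cpt : CompactSpace S]
  p : S →* L
  pcont : Continuous p
  psurj : Function.Surjective p

attribute [instance] CompactGroupOver.grp CompactGroupOver.top
  CompactGroupOver.tgrp CompactGroupOver.cpt

open MeasureTheory Set Pointwise Function

noncomputable instance : MeasurableSpace Circle := borel Circle
instance : BorelSpace Circle := ⟨rfl⟩

/-- A closed interval (closed arc) in the circle group `𝕋 = Circle`. -/
def IsClosedArc (I : Set Circle) : Prop :=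
  ∃ a b : ℝ, a ≤ b ∧ b - a ≤ 2 * Real.pi ∧ I = ⇑Circle.exp '' Set.Icc a b

/-- The twisted torus `𝕋 ⋊ {-1,1}`, realized on `Circle × ℤˣ` with multiplication
`(a,ε)(b,δ) = (a·b^ε, εδ)`. -/
def TT : Type := Circle × ℤˣ

namespace TT

instance instTopologicalSpace : TopologicalSpace TT :=
  inferInstanceAs (TopologicalSpace (Circle × ℤˣ))
instance instMeasurableSpace : MeasurableSpace TT :=
  inferInstanceAs (MeasurableSpace (Circle × ℤˣ))
instance instCompactSpace : CompactSpace TT :=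
  inferInstanceAs (CompactSpace (Circle × ℤˣ))
instance instT2Space : T2Space TT :=
  inferInstanceAs (T2Space (Circle × ℤˣ))

/-- The circle component. -/
def circ (x : TT) : Circle := Prod.fst x

/-- The sign component. -/
def sgn (x : TT) : ℤˣ := Prod.snd x

/-- Build an element of `𝕋 ⋊ {-1,1}` from its components. -/
def mk' (a : Circle) (e : ℤˣ) : TT := ((a, e) : Circle × ℤˣ)

instance instMul : Mul TT :=
  ⟨fun x y => mk' (x.circ * y.circ ^ ((x.sgn : ℤˣ) : ℤ)) (x.sgn * y.sgn)⟩
instance instOne : One TT := ⟨mk' 1 1⟩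
instance instInv : Inv TT :=
  ⟨fun x => mk' (x.circ ^ (-((x.sgn : ℤˣ) : ℤ))) x.sgn⟩

@[simp] lemma mul_circ (x y : TT) :
    (x * y).circ = x.circ * y.circ ^ ((x.sgn : ℤˣ) : ℤ) := rfl
@[simp] lemma mul_sgn (x y : TT) : (x * y).sgn = x.sgn * y.sgn := rfl
@[simp] lemma one_circ : (1 : TT).circ = 1 := rfl
@[simp] lemma one_sgn : (1 : TT).sgn = 1 := rfl
@[simp] lemma inv_circ (x : TT) : (x⁻¹).circ = x.circ ^ (-((x.sgn : ℤˣ) : ℤ)) := rfl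
@[simp] lemma inv_sgn (x : TT) : (x⁻¹).sgn = x.sgn := rfl

protected lemma ext {x y : TT} (h1 : x.circ = y.circ) (h2 : x.sgn = y.sgn) : x = y :=
  Prod.ext h1 h2

instance instGroup : Group TT where
  mul_assoc x y z := by
    refine TT.ext ?_ ?_
    · simp [mul_zpow, ← zpow_mul, mul_assoc]
      rw [mul_comm ((x.sgn : ℤˣ) : ℤ)]
    · simp [mul_assoc]
  one_mul x := by refine TT.ext ?_ ?_ <;> simp
  mul_one x := by refine TT.ext ?_ ?_ <;> simp
  inv_mul_cancel x := by
    refine TT.ext ?_ ?_ <;> simp [← zpow_mul, Int.units_mul_self]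

end TT

/-- The subset `I ⋊ {-1,1}` of `𝕋 ⋊ {-1,1}` attached to a subset `I ⊆ 𝕋`. -/
def TT.lift (I : Set Circle) : Set TT := {x : TT | x.circ ∈ I}

section Defs

variable {G : Type*}

/-- `(A,B)` is a critical pair: both sets are Borel of positive measure and
`m(AB) = min(1, m(A)+m(B))`. -/
def IsCriticalPair [Group G] [MeasurableSpace G] (m : Measure G) (A B : Set G) : Prop :=
  MeasurableSet A ∧ MeasurableSet B ∧ 0 < m A ∧ 0 < m B ∧
    m (A * B) = min 1 (m A + m B)

/-- `(A,B)` is a sub-critical pair: both sets are Borel of positive measure and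
`m(AB) < min(1, m(A)+m(B))`. -/
def IsSubCriticalPair [Group G] [MeasurableSpace G] (m : Measure G) (A B : Set G) : Prop :=
  MeasurableSet A ∧ MeasurableSet B ∧ 0 < m A ∧ 0 < m B ∧
    m (A * B) < min 1 (m A + m B)

/-- `(S,T)` is a sub-critical pair in the open subgroup `U` with respect to the Haar
probability measure of `U`; in terms of the ambient Haar probability measure `m` this
reads `m(ST) < min (m U) (m S + m T)`, since the Haar probability measure of `U` is
`m(· ∩ U)/m(U)`. -/
def SubCriticalInOpen [Group G] [MeasurableSpace G] (m : Measure G) (U : Subgroup G)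
    (S T : Set G) : Prop :=
  MeasurableSet S ∧ MeasurableSet T ∧ S ⊆ (U : Set G) ∧ T ⊆ (U : Set G) ∧
    0 < m S ∧ 0 < m T ∧ m (S * T) < min (m (U : Set G)) (m S + m T)

/-- `(A,B)` is almost sub-critical in the open normal subgroup `U`: there are conull
Borel subsets `A' ⊆ A`, `B' ⊆ B` and `p, q ∈ G` such that `(p⁻¹A' ∩ U, B'q⁻¹ ∩ U)` is
a sub-critical pair in `U`. -/
def AlmostSubCriticalIn [Group G] [MeasurableSpace G] (m : Measure G) (U : Subgroup G)
    (A B : Set G) : Prop :=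
  ∃ A' B' : Set G, MeasurableSet A' ∧ MeasurableSet B' ∧ A' ⊆ A ∧ B' ⊆ B ∧
    m (A \ A') = 0 ∧ m (B \ B') = 0 ∧
    ∃ p q : G, SubCriticalInOpen m U ((p⁻¹ • A') ∩ (U : Set G))
      (((· * q⁻¹) '' B') ∩ (U : Set G))

/-- `(A,B)` is locally sub-critical: it is almost sub-critical in some open normal
subgroup of `G`. -/
def LocallySubCritical [Group G] [TopologicalSpace G] [MeasurableSpace G]
    (m : Measure G) (A B : Set G) : Prop :=
  ∃ U : Subgroup G, U.Normal ∧ IsOpen (U : Set G) ∧ AlmostSubCriticalIn m U A B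

/-- `(m_G)_x^N`: the pushforward, under right multiplication by `x`, of the Haar
probability measure `μN` of the closed subgroup `N`, viewed as a measure on `G`. -/
def fiberMeasure [Group G] [MeasurableSpace G] (N : Subgroup G)
    (μN : Measure ↥N) (x : G) : Measure G :=
  Measure.map (fun n : ↥N => (n : G) * x) μN

/-- `(A,B)` is critical with respect to the closed normal subgroup `N` (with Haar
probability measure `μN`). -/
def CriticalWrt [Group G] [MeasurableSpace G] (m : Measure G) (N : Subgroup G)
    (μN : Measure ↥N) (A B : Set G) : Prop :=
  ∃ X : Set G, MeasurableSet X ∧ m Xᶜ = 0 ∧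
    ∃ Z : Set (G × G), MeasurableSet Z ∧ (m.prod m) Zᶜ = 0 ∧ Z ⊆ X ×ˢ X ∧
      (∀ x ∈ X, fiberMeasure N μN x A = m A) ∧
      (∀ y ∈ X, fiberMeasure N μN y B = m B) ∧
      ∀ p ∈ Z, fiberMeasure N μN (p.1 * p.2) (A * B)
        = fiberMeasure N μN p.1 A + fiberMeasure N μN p.2 B

/-- `C⁺ ⊆ G/U`: the set of cosets of `U` meeting `C`. -/
def plusSet [Group G] (U : Subgroup G) (C : Set G) : Set (G ⧸ U) :=
  QuotientGroup.mk '' C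

/-- `C ∩ Ux`, the part of `C` lying over the coset `x ∈ G/U`. -/
def cosetFiber [Group G] (U : Subgroup G) (C : Set G) (x : G ⧸ U) : Set G :=
  C ∩ QuotientGroup.mk ⁻¹' {x}

/-- `C` is `U`-balanced: the identity coset belongs to `C⁺` and every coset in `C⁺`
carries a positive measure part of `C`. -/
def UBalanced [Group G] [MeasurableSpace G] (m : Measure G) (U : Subgroup G)
    (C : Set G) : Prop :=
  QuotientGroup.mk (1 : G) ∈ plusSet U C ∧
    ∀ x ∈ plusSet U C, 0 < m (cosetFiber U C x)

/-- A set is regular if it equals the closure of its interior. -/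
def IsRegularSet {X : Type*} [TopologicalSpace X] (I : Set X) : Prop :=
  I = closure (interior I)

/-- `(I,J)` is left stable: `xJ ⊆ IJ` implies `x ∈ I`. -/
def IsLeftStable [Group G] (I J : Set G) : Prop :=
  ∀ x : G, (x * ·) '' J ⊆ I * J → x ∈ I

/-- `(I,J)` is right stable: `Ix ⊆ IJ` implies `x ∈ J`. -/
def IsRightStable [Group G] (I J : Set G) : Prop :=
  ∀ x : G, (· * x) '' I ⊆ I * J → x ∈ J

/-- `(I,J)` is stable if it is both left and right stable. -/
def IsStablePair [Group G] (I J : Set G) : Prop :=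
  IsLeftStable I J ∧ IsRightStable I J

end Defs

/-- A compact connected group `N` (with Haar probability measure `mN`) is a Kneser
group: every critical pair in `N` is covered by translates of closed intervals pulled
back under a continuous surjective homomorphism onto the circle group (here `mT`
denotes the Haar probability measure of the circle group). -/
def IsKneserGroup {N : Type*} [Group N] [TopologicalSpace N] [MeasurableSpace N]
    (mN : Measure N) (mT : Measure Circle) : Prop :=
  ∀ C D : Set N, IsCriticalPair mN C D →
    ∃ ξ : N →* Circle, Continuous ξ ∧ Function.Surjective ξ ∧
      ∃ I J : Set Circle, IsClosedArc I ∧ IsClosedArc J ∧ mN (C * D) = mT (I * J) ∧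
        ∃ s t : Circle, C ⊆ ⇑ξ ⁻¹' ((s * ·) '' I) ∧ D ⊆ ⇑ξ ⁻¹' ((· * t) '' J)

end
open MeasureTheory Set Pointwise Function

/-!
If `α x * β y` depends only on `x * y`, comparing the identity at `(x, y)` and at `(g * x, y)`
with pairs of the same products shows that `u ↦ α (g * u) * (α u)⁻¹` is almost everywhere a
constant `π g`. Uniqueness of these constants makes `π` a homomorphism, Fubini makes it
measurable, and Steinhaus' theorem makes a measurable homomorphism continuous. Hence
`α = π · c = c · (c⁻¹ π c)` almost everywhere, and substituting this into the cocycle identity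
shows that `(c⁻¹ π c)⁻¹ · β` is essentially constant.
-/

open Filter

theorem exists_measurable_eqOn_of_measurable_restrict {α β : Type*} [MeasurableSpace α]
    [MeasurableSpace β] [Nonempty β] {X : Set α} (hX : MeasurableSet X) {f : α → β}
    (hf : Measurable fun x : X => f x) : ∃ g : α → β, Measurable g ∧ EqOn g f X :=
  let ⟨g, hg, hgf⟩ := (MeasurableEmbedding.subtype_coe hX).exists_measurable_extend hf
    fun _ => inferInstance
  ⟨g, hg, fun x hx => congrFun hgf ⟨x, hx⟩⟩

theorem MonoidHom.continuous_of_measurable {G M : Type*} [Group G] [TopologicalSpace G]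
    [IsTopologicalGroup G] [LocallyCompactSpace G] [MeasurableSpace G] [BorelSpace G]
    [Group M] [TopologicalSpace M] [IsTopologicalGroup M] [SecondCountableTopology M]
    [MeasurableSpace M] [OpensMeasurableSpace M] (f : G →* M) (hf : Measurable f) :
    Continuous f := by
  refine continuous_of_continuousAt_one f fun V hV => ?_
  rw [map_one] at hV
  obtain ⟨W, hW, hWc, hWinv, hWV⟩ := exists_closed_nhds_one_inv_eq_mul_subset hV
  obtain ⟨D, hDc, hDW⟩ : ∃ D : Set M, D.Countable ∧ ⋃ m ∈ D, (· * m⁻¹) ⁻¹' W = univ :=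
    TopologicalSpace.countable_cover_nhds fun m =>
      (continuous_mul_const m⁻¹).continuousAt.preimage_mem_nhds (by simpa using hW)
  -- Some piece `E m` of a relatively compact open set, on which `f` lands in `W * m`, has
  -- positive Haar measure; by Steinhaus `E m / E m` is a neighbourhood of `1` mapped into `W / W`.
  let K : TopologicalSpace.PositiveCompacts G := Classical.arbitrary _
  let E : M → Set G := fun m => f ⁻¹' ((· * m⁻¹) ⁻¹' W) ∩ interior K
  have hE (m : M) : MeasurableSet (E m) :=
    (hf (hWc.preimage (continuous_mul_const m⁻¹)).measurableSet).inter
      isOpen_interior.measurableSet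
  obtain ⟨m, -, hm⟩ : ∃ m ∈ D, 0 < Measure.haar (E m) := by
    by_contra! h
    have hK : interior (K : Set G) ⊆ ⋃ m ∈ D, E m := fun g hg => by
      obtain ⟨m, hm, hgm⟩ := mem_iUnion₂.1 (hDW.symm ▸ mem_univ (f g))
      exact mem_iUnion₂.2 ⟨m, hm, hgm, hg⟩
    have := measure_mono_null hK ((measure_biUnion_null_iff hDc).2 fun m hm =>
      nonpos_iff_eq_zero.1 (h m hm))
    exact (isOpen_interior.measure_pos Measure.haar K.interior_nonempty).ne' this
  have hEfin : Measure.haar (E m) ≠ ⊤ :=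
    measure_ne_top_of_subset (inter_subset_right.trans interior_subset)
      K.isCompact.measure_ne_top
  refine mem_map.2 <| mem_of_superset
    (Measure.div_mem_nhds_one_of_haar_pos_ne_top Measure.haar (E m) (hE m) hm hEfin) ?_
  rintro _ ⟨a, ⟨ha, -⟩, b, ⟨hb, -⟩, rfl⟩
  simp only [mem_preimage, map_div] at ha hb ⊢
  rw [← mul_div_mul_right_eq_div _ _ m⁻¹, div_eq_mul_inv]
  exact hWV (mul_mem_mul ha (hWinv ▸ inv_mem_inv.2 hb))

theorem isMulRightInvariant_of_isProbabilityMeasure {G : Type*} [Group G] [TopologicalSpace G]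
    [IsTopologicalGroup G] [LocallyCompactSpace G] [MeasurableSpace G] [BorelSpace G]
    (μ : Measure G) [μ.IsHaarMeasure] [IsProbabilityMeasure μ] : μ.IsMulRightInvariant where
  map_mul_right_eq_self g := by
    have := Measure.isProbabilityMeasure_map (μ := μ) (measurable_mul_const g).aemeasurable
    exact Measure.isHaarMeasure_eq_of_isProbabilityMeasure _ _

theorem exists_ae_eq_const_of_ae_prod_eq {α β : Type*} [MeasurableSpace α] {μ : Measure α}
    [SFinite μ] [NeZero μ] {f : α → β} (h : ∀ᵐ p ∂μ.prod μ, f p.1 = f p.2) :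
    ∃ c, ∀ᵐ x ∂μ, f x = c :=
  let ⟨x₀, hx₀⟩ := (Measure.ae_ae_of_ae_prod h).exists
  ⟨f x₀, hx₀.mono fun _ h => h.symm⟩

theorem mul_inv_eq_mul_inv_of_mul_eq_mul {M : Type*} [Group M] {x y x' y' w w' : M}
    (h₁ : x * y = x' * y') (h₂ : w * y = w' * y') : w * x⁻¹ = w' * x'⁻¹ :=
  calc w * x⁻¹ = w * y * (x * y)⁻¹ := by group
    _ = w' * x'⁻¹ := by rw [h₁, h₂]; group

section Parametrization

variable {G : Type*} [Group G] [MeasurableSpace G] [MeasurableMul₂ G] [MeasurableInv G]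
  (μ ν ρ : Measure G) [SFinite μ] [SFinite ν] [SFinite ρ]

theorem measurePreserving_mul_div_prod [IsProbabilityMeasure ν] [μ.IsMulRightInvariant] :
    MeasurePreserving (fun p : G × G × G => (p.1 * p.2.1 / p.2.2, p.2.2))
      (μ.prod (ν.prod ρ)) (μ.prod ρ) :=
  (measurePreserving_div_prod μ ρ).comp <|
    ((measurePreserving_fst.comp (measurePreserving_mul_prod μ ν)).prod
      (MeasurePreserving.id ρ)).comp (measurePreserving_prodAssoc μ ν ρ).symm

theorem measurePreserving_prod_mul_div [IsProbabilityMeasure ρ] [ν.IsMulLeftInvariant]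
    [ν.IsMulRightInvariant] :
    MeasurePreserving (fun p : G × G × G => (p.1, p.1 * p.2.1 / p.2.2))
      (μ.prod (ν.prod ρ)) (μ.prod ν) := by
  simp_rw [mul_div_assoc]
  exact (measurePreserving_prod_mul μ ν).comp <|
    (MeasurePreserving.id μ).prod (measurePreserving_fst.comp (measurePreserving_div_prod ν ρ))

end Parametrization

section Cocycle

variable {G M : Type*} [Group G] [MeasurableSpace G] [MeasurableMul₂ G] [MeasurableInv G]
  {μ : Measure G} [IsProbabilityMeasure μ] [μ.IsMulRightInvariant] [Group M] {a b : G → M}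

/-- The pairs `(x, y)` and `(x * y / z, z)` have the same product, and each of them is
Haar distributed on `G × G` when `(x, y, z)` is Haar distributed on `G × G × G`. -/
theorem ae_mul_eq_mul_div_of_cocycle {Z : Set (G × G)} (hZ : ∀ᵐ p ∂μ.prod μ, p ∈ Z)
    (hab : ∀ p q : G × G, p ∈ Z → q ∈ Z → p.1 * p.2 = q.1 * q.2 →
      a p.1 * b p.2 = a q.1 * b q.2) :
    ∀ᵐ p ∂μ.prod (μ.prod μ), a p.1 * b p.2.1 = a (p.1 * p.2.1 / p.2.2) * b p.2.2 := by
  have h₁ := ((MeasurePreserving.id μ).prod (measurePreserving_fst (μ := μ) (ν := μ))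
    ).quasiMeasurePreserving.ae hZ
  have h₂ := (measurePreserving_mul_div_prod μ μ μ).quasiMeasurePreserving.ae hZ
  filter_upwards [h₁, h₂] with p hp₁ hp₂
  exact hab _ _ hp₁ hp₂ (div_mul_cancel _ _).symm

theorem exists_ae_mul_left_eq_of_cocycle [μ.IsMulLeftInvariant] [MeasurableSpace M]
    [MeasurableMul₂ M] [MeasurableInv M] [MeasurableEq M] (ha : Measurable a)
    (hab : ∀ᵐ p ∂μ.prod (μ.prod μ), a p.1 * b p.2.1 = a (p.1 * p.2.1 / p.2.2) * b p.2.2)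
    (g : G) : ∃ c, ∀ᵐ u ∂μ, a (g * u) = c * a u := by
  set D : G → M := fun u => a (g * u) * (a u)⁻¹
  have hDm : Measurable D := (ha.comp (measurable_const_mul g)).mul ha.inv
  have hg := ((measurePreserving_mul_left μ g).prod (MeasurePreserving.id (μ.prod μ))
    ).quasiMeasurePreserving.ae hab
  have hD : ∀ᵐ p ∂μ.prod (μ.prod μ), D p.1 = D (p.1 * p.2.1 / p.2.2) := by
    filter_upwards [hab, hg] with p h₁ h₂
    simp only [Prod.map_fst, Prod.map_snd, id] at h₂
    simp only [D, mul_div_assoc, mul_assoc] at h₁ h₂ ⊢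
    exact mul_inv_eq_mul_inv_of_mul_eq_mul h₁ h₂
  have hT := measurePreserving_prod_mul_div μ μ μ
  have hD₂ : ∀ᵐ q ∂μ.prod μ, D q.1 = D q.2 := hT.map_eq ▸ (ae_map_iff hT.aemeasurable
    (measurableSet_eq_fun (hDm.comp measurable_fst) (hDm.comp measurable_snd))).2 hD
  obtain ⟨c, hc⟩ := exists_ae_eq_const_of_ae_prod_eq hD₂
  exact ⟨c, hc.mono fun u hu => by rw [← hu, inv_mul_cancel_right]⟩

theorem exists_ae_eq_mul_const_of_cocycle (π : G →* M) {s : M} (hs : ∀ᵐ x ∂μ, a x = s * π x)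
    (hab : ∀ᵐ p ∂μ.prod (μ.prod μ), a p.1 * b p.2.1 = a (p.1 * p.2.1 / p.2.2) * b p.2.2) :
    ∃ t, ∀ᵐ y ∂μ, b y = π y * t := by
  have h₁ := (measurePreserving_fst (μ := μ) (ν := μ.prod μ)).quasiMeasurePreserving.ae hs
  have h₂ := (measurePreserving_fst.comp (measurePreserving_mul_div_prod μ μ μ)
    ).quasiMeasurePreserving.ae hs
  have hb : ∀ᵐ p ∂μ.prod (μ.prod μ), (π p.2.1)⁻¹ * b p.2.1 = (π p.2.2)⁻¹ * b p.2.2 := by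
    filter_upwards [hab, h₁, h₂] with p hp hp₁ hp₂
    simp only [comp_apply] at hp₂
    rw [hp₁, hp₂, map_div, map_mul] at hp
    calc (π p.2.1)⁻¹ * b p.2.1 = (s * π p.1 * π p.2.1)⁻¹ * (s * π p.1 * b p.2.1) := by group
      _ = (π p.2.2)⁻¹ * b p.2.2 := by rw [hp, div_eq_mul_inv]; group
  obtain ⟨x, hx⟩ := (Measure.ae_ae_of_ae_prod hb).exists
  obtain ⟨t, ht⟩ := exists_ae_eq_const_of_ae_prod_eq (f := fun y => (π y)⁻¹ * b y) hx
  exact ⟨t, ht.mono fun y hy => by rw [← hy, mul_inv_cancel_left]⟩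

end Cocycle

section Translates

variable {G M : Type*} [Group G] [MeasurableSpace G] [MeasurableMul₂ G] {μ : Measure G}
  [NeZero μ] [Group M] {a : G → M}

theorem exists_monoidHom_ae_mul_left_eq [μ.IsMulLeftInvariant]
    (h : ∀ g, ∃ c, ∀ᵐ u ∂μ, a (g * u) = c * a u) :
    ∃ π : G →* M, ∀ g, ∀ᵐ u ∂μ, a (g * u) = π g * a u := by
  choose π hπ using h
  have hπ_one : π 1 = 1 := by
    obtain ⟨u, hu⟩ := (hπ 1).exists
    rwa [one_mul, right_eq_mul] at hu
  have hπ_mul (g h : G) : π (g * h) = π g * π h := by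
    have hgh := (measurePreserving_mul_left μ h).quasiMeasurePreserving.ae (hπ g)
    obtain ⟨u, h₁, h₂, h₃⟩ := ((hπ (g * h)).and (hgh.and (hπ h))).exists
    rw [mul_assoc, h₂, h₃, ← mul_assoc] at h₁
    exact (mul_right_cancel h₁).symm
  exact ⟨⟨⟨π, hπ_one⟩, hπ_mul⟩, hπ⟩

variable [SFinite μ] [MeasurableSpace M] [MeasurableMul₂ M]

theorem measurable_of_ae_mul_left_eq [MeasurableInv M] {π : G → M} (ha : Measurable a)
    (h : ∀ g, ∀ᵐ u ∂μ, a (g * u) = π g * a u) : Measurable π := by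
  intro t ht
  set S := {p : G × G | a (p.1 * p.2) * (a p.2)⁻¹ ∉ t}
  have hS : MeasurableSet S :=
    ((ha.comp measurable_mul).mul (ha.comp measurable_snd).inv) ht.compl
  have hπt : π ⁻¹' t = {g | μ (Prod.mk g ⁻¹' S) = 0} := by
    ext g
    have hg : ∀ᵐ u ∂μ, a (g * u) * (a u)⁻¹ = π g :=
      (h g).mono fun u hu => by rw [hu, mul_inv_cancel_right]
    change π g ∈ t ↔ μ {u | ¬a (g * u) * (a u)⁻¹ ∈ t} = 0
    rw [← ae_iff]
    exact ⟨fun hgt => hg.mono fun u hu => hu ▸ hgt,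
      fun hgt => let ⟨u, h₁, h₂⟩ := (hg.and hgt).exists; h₁ ▸ h₂⟩
  rw [hπt]
  exact measurable_measure_prodMk_left hS (measurableSet_singleton 0)

theorem exists_ae_eq_mul_const_of_ae_mul_left_eq [μ.IsMulLeftInvariant] [MeasurableInv G]
    [MeasurableEq M] (π : G →* M) (ha : Measurable a) (hπ : Measurable π)
    (h : ∀ g, ∀ᵐ u ∂μ, a (g * u) = π g * a u) : ∃ c, ∀ᵐ x ∂μ, a x = π x * c := by
  have hS : MeasurableSet {p : G × G | a (p.1 * p.2) = π p.1 * a p.2} :=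
    measurableSet_eq_fun (ha.comp measurable_mul)
      ((hπ.comp measurable_fst).mul (ha.comp measurable_snd))
  obtain ⟨u, hu⟩ := ((Measure.ae_ae_comm (μ := μ) (ν := μ) hS).1 (ae_of_all _ h)).exists
  refine ⟨π u⁻¹ * a u, ?_⟩
  filter_upwards [(quasiMeasurePreserving_mul_right μ u⁻¹).ae hu] with x hx
  rwa [inv_mul_cancel_right, map_mul, mul_assoc] at hx

end Translates

theorem exists_continuous_monoidHom_ae_eq_const_mul {G M : Type*} [Group G] [TopologicalSpace G]
    [IsTopologicalGroup G] [LocallyCompactSpace G] [SecondCountableTopology G]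
    [MeasurableSpace G] [BorelSpace G] {μ : Measure G} [SFinite μ] [NeZero μ]
    [μ.IsMulLeftInvariant] [Group M] [TopologicalSpace M] [IsTopologicalGroup M]
    [SecondCountableTopology M] [T2Space M] [MeasurableSpace M] [BorelSpace M] {a : G → M}
    (ha : Measurable a) (h : ∀ g, ∃ c, ∀ᵐ u ∂μ, a (g * u) = c * a u) :
    ∃ π : G →* M, Continuous π ∧ ∃ s, ∀ᵐ x ∂μ, a x = s * π x := by
  obtain ⟨π, hπ⟩ := exists_monoidHom_ae_mul_left_eq h
  have hπm := measurable_of_ae_mul_left_eq ha hπ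
  obtain ⟨c, hc⟩ := exists_ae_eq_mul_const_of_ae_mul_left_eq π ha hπm hπ
  refine ⟨(MulAut.conj c⁻¹).toMonoidHom.comp π, ?_, c, hc.mono fun x hx => ?_⟩
  · exact (IsTopologicalGroup.continuous_conj c⁻¹).comp (π.continuous_of_measurable hπm)
  · simp [hx, mul_assoc]

theorem cocycle_maps_are_translates_of_homomorphism_general
    {G M : Type*}
    [Group G] [TopologicalSpace G] [IsTopologicalGroup G] [CompactSpace G]
    [SecondCountableTopology G] [MeasurableSpace G] [BorelSpace G]
    [Group M] [TopologicalSpace M] [IsTopologicalGroup M]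
    [SecondCountableTopology M] [T2Space M] [MeasurableSpace M] [BorelSpace M]
    (mG : Measure G) [mG.IsHaarMeasure] [IsProbabilityMeasure mG]
    (X : Set G) (hX : MeasurableSet X) (hXco : mG Xᶜ = 0)
    (Z : Set (G × G)) (hZco : (mG.prod mG) Zᶜ = 0)
    (hZX : Z ⊆ X ×ˢ X)
    (α β : G → M)
    (hα : Measurable fun x : X => α ↑x)
    (hco : ∀ p q : G × G, p ∈ Z → q ∈ Z → p.1 * p.2 = q.1 * q.2 →
      α p.1 * β p.2 = α q.1 * β q.2) :
    ∃ π : G →* M, Continuous π ∧ ∃ s t : M,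
      (∀ᵐ x ∂mG, α x = s * π x) ∧ (∀ᵐ y ∂mG, β y = π y * t) := by
  have := isMulRightInvariant_of_isProbabilityMeasure mG
  obtain ⟨a, ha, haX⟩ := exists_measurable_eqOn_of_measurable_restrict hX hα
  have hab := ae_mul_eq_mul_div_of_cocycle (a := a) (b := β) (mem_ae_iff.2 hZco)
    fun p q hp hq hpq => by
      rw [haX (hZX hp).1, haX (hZX hq).1]
      exact hco p q hp hq hpq
  obtain ⟨π, hπ, s, hs⟩ :=
    exists_continuous_monoidHom_ae_eq_const_mul ha (exists_ae_mul_left_eq_of_cocycle ha hab)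
  obtain ⟨t, ht⟩ := exists_ae_eq_mul_const_of_cocycle π hs hab
  refine ⟨π, hπ, s, t, ?_, ht⟩
  filter_upwards [mem_ae_iff.2 hXco, hs] with x hx hsx
  rwa [← haX hx]

/-- Proposition 2: measurable maps `α, β` on a conull set which
satisfy the multiplicative cocycle identity on a conull set of pairs are almost
everywhere a left, resp. right, translate of a continuous homomorphism. -/
theorem cocycle_maps_are_translates_of_homomorphism
    {G M : Type*}
    [Group G] [TopologicalSpace G] [IsTopologicalGroup G] [CompactSpace G]
    [SecondCountableTopology G] [T2Space G] [MeasurableSpace G] [BorelSpace G]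
    [Group M] [TopologicalSpace M] [IsTopologicalGroup M] [CompactSpace M]
    [SecondCountableTopology M] [T2Space M] [MeasurableSpace M] [BorelSpace M]
    (mG : Measure G) [mG.IsHaarMeasure] [IsProbabilityMeasure mG]
    (X : Set G) (hX : MeasurableSet X) (hXco : mG Xᶜ = 0)
    (Z : Set (G × G)) (hZ : MeasurableSet Z) (hZco : (mG.prod mG) Zᶜ = 0)
    (hZX : Z ⊆ X ×ˢ X)
    (α β : G → M)
    (hα : Measurable fun x : X => α ↑x) (hβ : Measurable fun x : X => β ↑x)
    (hco : ∀ p q : G × G, p ∈ Z → q ∈ Z → p.1 * p.2 = q.1 * q.2 →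
      α p.1 * β p.2 = α q.1 * β q.2) :
    ∃ π : G →* M, Continuous π ∧ ∃ s t : M,
      (∀ᵐ x ∂mG, α x = s * π x) ∧ (∀ᵐ y ∂mG, β y = π y * t) :=
  cocycle_maps_are_translates_of_homomorphism_general mG X hX hXco Z hZco hZX α β hα hco
end

section
/- Let G be a compact second countable group with Haar probability measure m_G, and suppose (μ_n) is a sequence of Borel probability measures on G converging to a Borel probability measure μ in the weak* topology. Then for every Borel set B ⊆ G and every subsequence (n_k) there exist a further subsequence (n_{k_j}) and an m_G-conull Borel set X ⊆ G such that lim_{j→∞} (r_x)_*μ_{n_{k_j}}(B) = (r_x)_*μ(B) for all x ∈ X, where (r_x)_*ν denotes the pushforward of a measure ν under right multiplication by x, i.e. (r_x)_*ν(B) = ν(Bx⁻¹). -/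
open MeasureTheory Set Pointwise Function

/-!
Write `F_ν x = ν (B x⁻¹)`. By Fubini, `∫ F_ν F_ν' dm_G = ∫ K d(ν ⊗ ν')` with the overlap kernel
`K (g, h) = m_G (g⁻¹B ∩ h⁻¹B)`, which is continuous because left translation is continuous in
measure. Weak* convergence passes to products of probability measures, so
`‖F_{μ_n} - F_μ‖₂² = ∫ K d(μ_n ⊗ μ_n) - 2 ∫ K d(μ_n ⊗ μ) + ∫ K d(μ ⊗ μ) → 0`.
Convergence in `L²` gives convergence in measure, hence almost everywhere along a subsequence.
-/

open Filter Topology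
open scoped symmDiff

section MeasurePreservingFamily

variable {X Z : Type*} [MeasurableSpace X] {μ : Measure X} [IsFiniteMeasure μ]

lemma abs_measureReal_inter_sub_le {a b c d : Set X} (ha : NullMeasurableSet a μ)
    (hb : NullMeasurableSet b μ) (hc : NullMeasurableSet c μ) (hd : NullMeasurableSet d μ) :
    |μ.real (a ∩ c) - μ.real (b ∩ d)| ≤ μ.real (a ∆ b) + μ.real (c ∆ d) :=
  (abs_measureReal_sub_le_measureReal_symmDiff (ha.inter hc) (hb.inter hd)).trans <|
    (measureReal_mono fun x hx => by
      simp only [mem_symmDiff, mem_inter_iff, mem_union] at hx ⊢; tauto).trans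
      (measureReal_union_le _ _)

variable [TopologicalSpace X] [BorelSpace X] [R1Space X] [μ.InnerRegularCompactLTTop]
  [TopologicalSpace Z]

theorem continuous_measureReal_preimage_inter_preimage {f g : Z → C(X, X)}
    (hf : Continuous f) (hg : Continuous g) (hfμ : ∀ z, MeasurePreserving (f z) μ μ)
    (hgμ : ∀ z, MeasurePreserving (g z) μ μ) {s t : Set X} (hs : NullMeasurableSet s μ)
    (ht : NullMeasurableSet t μ) :
    Continuous fun z => μ.real (f z ⁻¹' s ∩ g z ⁻¹' t) := by
  refine continuous_iff_continuousAt.2 fun z₀ => tendsto_iff_dist_tendsto_zero.2 ?_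
  have symmDiff_small : ∀ {h : Z → C(X, X)} {u : Set X}, Continuous h →
      (∀ z, MeasurePreserving (h z) μ μ) → NullMeasurableSet u μ →
      Tendsto (fun z => μ.real ((h z ⁻¹' u) ∆ (h z₀ ⁻¹' u))) (𝓝 z₀) (𝓝 0) :=
    fun hh hhμ hu => by
      simpa [Function.comp_def, Measure.real] using
        (ENNReal.tendsto_toReal ENNReal.zero_ne_top).comp
          (tendsto_measure_symmDiff_preimage_nhds_zero (hh.tendsto z₀)
            (.of_forall hhμ) (hhμ z₀) hu (measure_ne_top μ _))
  have preimage {h : Z → C(X, X)} {u : Set X} (hhμ : ∀ z, MeasurePreserving (h z) μ μ)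
      (hu : NullMeasurableSet u μ) (z : Z) : NullMeasurableSet (h z ⁻¹' u) μ :=
    hu.preimage (hhμ z).quasiMeasurePreserving
  refine squeeze_zero (fun _ => dist_nonneg)
    (fun z => abs_measureReal_inter_sub_le (preimage hfμ hs z) (preimage hfμ hs z₀)
      (preimage hgμ ht z) (preimage hgμ ht z₀)) ?_
  simpa using (symmDiff_small hf hfμ hs).add (symmDiff_small hg hgμ ht)

end MeasurePreservingFamily

theorem tendstoInMeasure_of_tendsto_integral_sq_sub {α ι : Type*} [MeasurableSpace α]
    {μ : Measure α} {l : Filter ι} {f : ι → α → ℝ} {g : α → ℝ} (hf : ∀ i, MemLp (f i) 2 μ)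
    (hg : MemLp g 2 μ) (hfg : Tendsto (fun i => ∫ x, (f i x - g x) ^ 2 ∂μ) l (𝓝 0)) :
    TendstoInMeasure μ f l g := by
  refine tendstoInMeasure_of_tendsto_eLpNorm two_ne_zero (fun i => (hf i).1) hg.1 ?_
  have eLpNorm_eq : ∀ i, eLpNorm (f i - g) 2 μ
      = ENNReal.ofReal ((∫ x, (f i x - g x) ^ 2 ∂μ) ^ (2 : ℝ)⁻¹) := fun i => by
    simp [((hf i).sub hg).eLpNorm_eq_integral_rpow_norm two_ne_zero ENNReal.ofNat_ne_top]
  have hcont : Continuous fun y : ℝ => ENNReal.ofReal (y ^ (2 : ℝ)⁻¹) :=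
    ENNReal.continuous_ofReal.comp (Real.continuous_rpow_const (by norm_num))
  simpa [eLpNorm_eq, Function.comp_def] using (hcont.tendsto 0).comp hfg

namespace MeasureTheory.ProbabilityMeasure

variable {X : Type*} [TopologicalSpace X] [MeasurableSpace X] [OpensMeasurableSpace X]
  {ι : Type*} {l : Filter ι}

theorem tendsto_of_forall_continuousMap {νs : ι → ProbabilityMeasure X}
    {ν : ProbabilityMeasure X}
    (h : ∀ f : C(X, ℝ), Tendsto (fun i => ∫ x, f x ∂(νs i)) l (𝓝 (∫ x, f x ∂ν))) :
    Tendsto νs l (𝓝 ν) :=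
  tendsto_iff_forall_integral_tendsto.2 fun f => h f.toContinuousMap

theorem tendsto_integral_prod [CompactSpace X] [SecondCountableTopology X]
    [TopologicalSpace.PseudoMetrizableSpace X] {νs νs' : ι → ProbabilityMeasure X}
    {ν ν' : ProbabilityMeasure X} (h : Tendsto νs l (𝓝 ν)) (h' : Tendsto νs' l (𝓝 ν'))
    (K : C(X × X, ℝ)) :
    Tendsto (fun i => ∫ p, K p ∂((νs i : Measure X).prod (νs' i)))
      l (𝓝 (∫ p, K p ∂((ν : Measure X).prod ν'))) :=
  tendsto_iff_forall_integral_tendsto.1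
    ((continuous_prod.tendsto (ν, ν')).comp (h.prodMk_nhds h'))
    (BoundedContinuousFunction.mkOfCompact K)

end MeasureTheory.ProbabilityMeasure

section RightTranslates

variable {G : Type*} [Group G] [MeasurableSpace G] [MeasurableMul₂ G] {B : Set G}

theorem measurable_measure_preimage_mul_right (ν : Measure G) [SFinite ν]
    (hB : MeasurableSet B) : Measurable fun x => ν ((· * x) ⁻¹' B) :=
  measurable_measure_prodMk_left (s := {p : G × G | p.2 * p.1 ∈ B})
    ((measurable_snd.mul measurable_fst) hB)

theorem memLp_measureReal_preimage_mul_right (mG : Measure G) [IsFiniteMeasure mG]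
    (hB : MeasurableSet B) (ν : Measure G) [IsProbabilityMeasure ν] (p : ENNReal) :
    MemLp (fun x => ν.real ((· * x) ⁻¹' B)) p mG :=
  .of_bound (measurable_measure_preimage_mul_right ν hB).ennreal_toReal.aestronglyMeasurable 1
    (.of_forall fun _ => by
      rw [Real.norm_eq_abs, abs_of_nonneg measureReal_nonneg]; exact measureReal_le_one)

theorem measurableSet_mul_mem_and_mul_mem (hB : MeasurableSet B) :
    MeasurableSet {q : G × G × G | q.2.1 * q.1 ∈ B ∧ q.2.2 * q.1 ∈ B} :=
  ((measurable_snd.fst.mul measurable_fst) hB).inter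
    ((measurable_snd.snd.mul measurable_fst) hB)

/-- Both sides are the measure of `{(x, g, h) | g x ∈ B ∧ h x ∈ B}` under `mG ⊗ ν ⊗ ν'`. -/
theorem lintegral_measure_preimage_mul_right_mul (mG ν ν' : Measure G) [SFinite mG]
    [SFinite ν] [SFinite ν'] (hB : MeasurableSet B) :
    ∫⁻ x, ν ((· * x) ⁻¹' B) * ν' ((· * x) ⁻¹' B) ∂mG
      = ∫⁻ p, mG ((p.1 * ·) ⁻¹' B ∩ (p.2 * ·) ⁻¹' B) ∂(ν.prod ν') := by
  set T : Set (G × G × G) := {q | q.2.1 * q.1 ∈ B ∧ q.2.2 * q.1 ∈ B}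
  have hT : MeasurableSet T := measurableSet_mul_mem_and_mul_mem hB
  calc ∫⁻ x, ν ((· * x) ⁻¹' B) * ν' ((· * x) ⁻¹' B) ∂mG = mG.prod (ν.prod ν') T := by
        simp_rw [Measure.prod_apply hT, ← Measure.prod_prod]
        rfl
    _ = _ := Measure.prod_apply_symm hT

theorem integral_measureReal_preimage_mul_right_mul (mG ν ν' : Measure G) [IsFiniteMeasure mG]
    [IsFiniteMeasure ν] [IsFiniteMeasure ν'] (hB : MeasurableSet B) :
    ∫ x, ν.real ((· * x) ⁻¹' B) * ν'.real ((· * x) ⁻¹' B) ∂mG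
      = ∫ p, mG.real ((p.1 * ·) ⁻¹' B ∩ (p.2 * ·) ⁻¹' B) ∂(ν.prod ν') := by
  have hmeas : Measurable fun p : G × G => mG ((p.1 * ·) ⁻¹' B ∩ (p.2 * ·) ⁻¹' B) :=
    measurable_measure_prodMk_right (measurableSet_mul_mem_and_mul_mem hB)
  simp_rw [Measure.real, ← ENNReal.toReal_mul]
  rw [integral_toReal, integral_toReal hmeas.aemeasurable (.of_forall fun _ => measure_lt_top _ _),
    lintegral_measure_preimage_mul_right_mul mG ν ν' hB]
  · exact ((measurable_measure_preimage_mul_right ν hB).mul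
      (measurable_measure_preimage_mul_right ν' hB)).aemeasurable
  · exact .of_forall fun _ => ENNReal.mul_lt_top (measure_lt_top _ _) (measure_lt_top _ _)

end RightTranslates

section CompactGroup

variable {G : Type*} [Group G] [TopologicalSpace G] [IsTopologicalGroup G] [MeasurableSpace G]
  [BorelSpace G] (mG : Measure G) [mG.IsMulLeftInvariant] [IsFiniteMeasure mG]
  [mG.InnerRegularCompactLTTop] {B : Set G}

theorem continuous_measureReal_preimage_mul_left_inter (hB : MeasurableSet B) :
    Continuous fun p : G × G => mG.real ((p.1 * ·) ⁻¹' B ∩ (p.2 * ·) ⁻¹' B) := by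
  let mulLeft : G → C(G, G) := fun g => ⟨(g * ·), continuous_const_mul g⟩
  have hcont : Continuous mulLeft :=
    ContinuousMap.continuous_of_continuous_uncurry _ continuous_mul
  exact continuous_measureReal_preimage_inter_preimage (f := fun p : G × G => mulLeft p.1)
    (g := fun p : G × G => mulLeft p.2) (hcont.comp continuous_fst) (hcont.comp continuous_snd)
    (fun p => measurePreserving_mul_left mG p.1)
    (fun p => measurePreserving_mul_left mG p.2)
    hB.nullMeasurableSet hB.nullMeasurableSet

variable [CompactSpace G] [SecondCountableTopology G] [T2Space G]

theorem tendsto_integral_sq_measureReal_preimage_mul_right_sub (hB : MeasurableSet B)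
    {ι : Type*} {l : Filter ι} {νs : ι → ProbabilityMeasure G} {ν : ProbabilityMeasure G}
    (h : Tendsto νs l (𝓝 ν)) :
    Tendsto (fun i => ∫ x, ((νs i : Measure G).real ((· * x) ⁻¹' B)
      - (ν : Measure G).real ((· * x) ⁻¹' B)) ^ 2 ∂mG) l (𝓝 0) := by
  let K : C(G × G, ℝ) := ⟨_, continuous_measureReal_preimage_mul_left_inter mG hB⟩
  let F : ProbabilityMeasure G → G → ℝ := fun ν x => (ν : Measure G).real ((· * x) ⁻¹' B)
  have hF : ∀ ν ν', ∫ x, F ν x * F ν' x ∂mG = ∫ p, K p ∂((ν : Measure G).prod ν') :=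
    fun ν ν' => integral_measureReal_preimage_mul_right_mul mG ν ν' hB
  have hmul : ∀ ν ν', Integrable (fun x => F ν x * F ν' x) mG := fun ν ν' =>
    (memLp_measureReal_preimage_mul_right mG hB ν 2).integrable_mul
      (memLp_measureReal_preimage_mul_right mG hB ν' 2)
  have expand : ∀ i, ∫ x, (F (νs i) x - F ν x) ^ 2 ∂mG = ∫ x, F (νs i) x * F (νs i) x ∂mG
      - 2 * ∫ x, F (νs i) x * F ν x ∂mG + ∫ x, F ν x * F ν x ∂mG := fun i => by
    have square : (fun x => (F (νs i) x - F ν x) ^ 2) = fun x =>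
        (F (νs i) x * F (νs i) x - 2 * (F (νs i) x * F ν x)) + F ν x * F ν x := by
      ext x; ring
    have hsub : Integrable (fun x => F (νs i) x * F (νs i) x - 2 * (F (νs i) x * F ν x)) mG :=
      (hmul _ _).sub ((hmul _ _).const_mul 2)
    rw [square, integral_add hsub (hmul _ _),
      integral_sub (hmul _ _) ((hmul _ _).const_mul 2), integral_const_mul]
  have lim := ((ProbabilityMeasure.tendsto_integral_prod h h K).sub
    ((ProbabilityMeasure.tendsto_integral_prod h (tendsto_const_nhds (x := ν)) K).const_mul 2)).add
      (tendsto_const_nhds (x := ∫ p, K p ∂((ν : Measure G).prod ν)))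
  show Tendsto (fun i => ∫ x, (F (νs i) x - F ν x) ^ 2 ∂mG) l (𝓝 0)
  simp_rw [expand, hF]
  convert lim using 2
  ring

end CompactGroup

/-- Proposition rel1.1: if `μ_n → μ` in the weak* topology, then
for every Borel set `B` and every subsequence there is a further subsequence along
which `(r_x)_*μ_n(B) → (r_x)_*μ(B)` for Haar-almost every `x`. -/
theorem weakstar_convergence_of_translates
    {G : Type*} [Group G] [TopologicalSpace G] [IsTopologicalGroup G] [CompactSpace G]
    [SecondCountableTopology G] [T2Space G] [MeasurableSpace G] [BorelSpace G]
    (mG : Measure G) [mG.IsHaarMeasure] [IsProbabilityMeasure mG]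
    (μs : ℕ → Measure G) (hμs : ∀ n, IsProbabilityMeasure (μs n))
    (μ : Measure G) [IsProbabilityMeasure μ]
    (hconv : ∀ f : C(G, ℝ),
      Filter.Tendsto (fun n => ∫ x, f x ∂(μs n)) Filter.atTop (nhds (∫ x, f x ∂μ)))
    (B : Set G) (hB : MeasurableSet B) (nk : ℕ → ℕ) (hnk : StrictMono nk) :
    ∃ j : ℕ → ℕ, StrictMono j ∧ ∃ X : Set G, MeasurableSet X ∧ mG Xᶜ = 0 ∧
      ∀ x ∈ X, Filter.Tendsto (fun i => μs (nk (j i)) ((· * x) ⁻¹' B))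
        Filter.atTop (nhds (μ ((· * x) ⁻¹' B))) := by
  let νs : ℕ → ProbabilityMeasure G := fun n => ⟨μs (nk n), hμs (nk n)⟩
  let ν : ProbabilityMeasure G := ⟨μ, inferInstance⟩
  have hlim : Tendsto νs atTop (𝓝 ν) := ProbabilityMeasure.tendsto_of_forall_continuousMap
    fun f => (hconv f).comp hnk.tendsto_atTop
  have hL2 := tendsto_integral_sq_measureReal_preimage_mul_right_sub mG hB hlim
  have hmeas := tendstoInMeasure_of_tendsto_integral_sq_sub
    (fun n => memLp_measureReal_preimage_mul_right mG hB (νs n : Measure G) 2)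
    (memLp_measureReal_preimage_mul_right mG hB (ν : Measure G) 2) hL2
  obtain ⟨j, hj, hae⟩ := hmeas.exists_seq_tendsto_ae
  obtain ⟨X, hX, hXmeas, hXconv⟩ := hae.exists_measurable_mem
  refine ⟨j, hj, X, hXmeas, mem_ae_iff.1 hX, fun x hx => ?_⟩
  exact (ENNReal.tendsto_toReal_iff (fun _ => measure_ne_top _ _) (measure_ne_top _ _)).1
    (hXconv x hx)
end

section
/- Let G be a compact group with Haar probability measure m_G and suppose p : G → 𝕋 is a continuous surjective homomorphism. Let I, J ⊆ 𝕋 be closed intervals of positive length, and let A and B be Borel subsets of G with A conull in p⁻¹(I) and B conull in p⁻¹(J) (i.e. A ⊆ p⁻¹(I) with m_G(p⁻¹(I) \ A) = 0, and similarly for B). Then m_G(A) = m_𝕋(I), m_G(B) = m_𝕋(J), and (A,B) is a critical pair in G: m_G(AB) = min(1, m_G(A) + m_G(B)). -/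
open MeasureTheory Set Pointwise Function

/-! Pushing `m_G` forward along `p` gives `m_𝕋`, so `m_G(A) = m_𝕋(I)`, `m_G(B) = m_𝕋(J)`, and
`AB ⊆ p⁻¹(IJ)` bounds `m_G(AB)` from above. Conversely, if `p(x)` lies in the interior of the arc
`IJ`, then `I ∩ p(x)J⁻¹` contains an arc of positive length, so `p⁻¹(I) ∩ x p⁻¹(J)⁻¹` has positive
measure; as the Haar measure of a compact group is inversion invariant, this set is not covered by
the null sets `p⁻¹(I) \ A` and `x (p⁻¹(J) \ B)⁻¹`, which forces `x ∈ AB`. Hence `AB` is `p⁻¹(IJ)`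
up to the two fibres over the endpoints of `IJ`, an arc of normalised length
`min 1 (m_𝕋(I) + m_𝕋(J))`. -/

section CompactGroup

variable {G : Type*} [Group G] [TopologicalSpace G] [IsTopologicalGroup G] [CompactSpace G]
  [MeasurableSpace G] [BorelSpace G] (μ : Measure G) [μ.IsHaarMeasure] [IsProbabilityMeasure μ]

theorem MeasureTheory.Measure.isMulRightInvariant_of_compactSpace : μ.IsMulRightInvariant :=
  ⟨fun g ↦
    have : IsProbabilityMeasure (μ.map (· * g)) :=
      isProbabilityMeasure_map (continuous_mul_const g).aemeasurable
    isHaarMeasure_eq_of_isProbabilityMeasure _ _⟩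

theorem MeasureTheory.Measure.isInvInvariant_of_compactSpace : μ.IsInvInvariant := by
  have := μ.isMulRightInvariant_of_compactSpace
  have : IsProbabilityMeasure μ.inv := isProbabilityMeasure_map continuous_inv.aemeasurable
  have : μ.inv.IsHaarMeasure := {}
  exact ⟨isHaarMeasure_eq_of_isProbabilityMeasure _ _⟩

end CompactGroup

theorem MonoidHom.preimage_smul_inv {G H : Type*} [Group G] [Group H] (p : G →* H) (x : G)
    (S : Set H) : p ⁻¹' (p x • S⁻¹) = x • (p ⁻¹' S)⁻¹ := by
  ext y
  simp [mem_smul_set_iff_inv_smul_mem]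

section InvariantMeasure

variable {G : Type*} [Group G] [MeasurableSpace G] [MeasurableInv G]
  {μ : Measure G} [μ.IsMulLeftInvariant] [μ.IsInvInvariant] {A B A₀ B₀ : Set G}

theorem mem_mul_of_measure_inter_smul_inv_pos (hA : μ (A₀ \ A) = 0) (hB : μ (B₀ \ B) = 0)
    {x : G} (h : 0 < μ (A₀ ∩ x • B₀⁻¹)) : x ∈ A * B := by
  have hnull : μ ((A₀ \ A) ∪ x • (B₀ \ B)⁻¹) = 0 := by
    rw [measure_union_null_iff, measure_smul, Measure.measure_inv]
    exact ⟨hA, hB⟩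
  rw [← measure_sdiff_null hnull] at h
  obtain ⟨g, ⟨hgA₀, hgB₀⟩, hg⟩ := nonempty_of_measure_ne_zero h.ne'
  simp only [mem_union, mem_sdiff, not_or, not_and_not_right, mem_smul_set_iff_inv_smul_mem,
    mem_inv, smul_eq_mul, mul_inv_rev, inv_inv] at hg hgB₀
  exact ⟨g, hg.1 hgA₀, g⁻¹ * x, hg.2 hgB₀, mul_inv_cancel_left g x⟩

theorem MonoidHom.preimage_singleton_subset_mul {H : Type*} [Group H] [MeasurableSpace H]
    {ν : Measure H} {p : G →* H} (hp : MeasurePreserving p μ ν) {I J : Set H}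
    (hA : μ (p ⁻¹' I \ A) = 0) (hB : μ (p ⁻¹' J \ B) = 0) {z : H}
    (hm : NullMeasurableSet (I ∩ z • J⁻¹) ν) (hz : 0 < ν (I ∩ z • J⁻¹)) :
    p ⁻¹' {z} ⊆ A * B := by
  rintro x rfl
  refine mem_mul_of_measure_inter_smul_inv_pos hA hB ?_
  rw [← p.preimage_smul_inv, ← preimage_inter]
  rwa [hp.measure_preimage hm]

end InvariantMeasure

open Metric in
theorem AddCircle.coe_image_closedBall (T x ε : ℝ) :
    ((↑) : ℝ → AddCircle T) '' closedBall x ε = closedBall (x : AddCircle T) ε := by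
  refine Subset.antisymm ?_ fun y hy ↦ ?_
  · rw [image_subset_iff, coe_real_preimage_closedBall_eq_iUnion]
    exact subset_iUnion_of_subset 0 (by simp)
  · obtain ⟨w, rfl⟩ := QuotientAddGroup.mk_surjective y
    have hw : w ∈ ((↑) : ℝ → AddCircle T) ⁻¹' closedBall (x : AddCircle T) ε := hy
    rw [coe_real_preimage_closedBall_eq_iUnion, mem_iUnion] at hw
    obtain ⟨n, hn⟩ := hw
    refine ⟨w - n • T, ?_, by simp [coe_period]⟩
    rw [mem_closedBall, Real.dist_eq] at hn ⊢
    rwa [sub_sub, add_comm]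

theorem AddCircle.haarAddCircle_coe_image_Icc {T : ℝ} [hT : Fact (0 < T)] (u v : ℝ) :
    haarAddCircle (((↑) : ℝ → AddCircle T) '' Icc u v) = ENNReal.ofReal (min 1 ((v - u) / T)) := by
  have hIcc : Icc u v = Metric.closedBall ((u + v) / 2) ((v - u) / 2) := by
    rw [Real.closedBall_eq_Icc]; congr 1 <;> ring
  have hvol := volume_closedBall (T := T) (x := ((u + v) / 2 : ℝ)) ((v - u) / 2)
  rw [volume_eq_smul_haarAddCircle, Measure.smul_apply, smul_eq_mul,
    ← ENNReal.eq_div_iff (by simpa using hT.out) ENNReal.ofReal_ne_top,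
    ← ENNReal.ofReal_div_of_pos hT.out, mul_div_cancel₀ _ two_ne_zero] at hvol
  rw [hIcc, coe_image_closedBall, hvol, ← min_div_div_right hT.out.le, div_self hT.out.ne']

namespace Circle

theorem isCompact_exp_image_Icc (u v : ℝ) : IsCompact (exp '' Icc u v) :=
  isCompact_Icc.image exp.continuous

theorem measurableSet_exp_image_Icc_inter_smul_inv (a b c d : ℝ) (z : Circle) :
    MeasurableSet (exp '' Icc a b ∩ z • (exp '' Icc c d)⁻¹) :=
  ((isCompact_exp_image_Icc a b).isClosed.inter
    ((isCompact_exp_image_Icc c d).inv.smul z).isClosed).measurableSet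

theorem exp_image_Icc_mul_subset (a b c d : ℝ) :
    exp '' Icc a b * exp '' Icc c d ⊆ exp '' Icc (a + c) (b + d) := by
  rintro _ ⟨_, ⟨s, hs, rfl⟩, _, ⟨t, ht, rfl⟩, rfl⟩
  exact ⟨s + t, ⟨add_le_add hs.1 ht.1, add_le_add hs.2 ht.2⟩, exp_add s t⟩

theorem exp_image_Icc_sdiff_Ioo_subset (u v : ℝ) :
    exp '' Icc u v \ exp '' Ioo u v ⊆ {exp u, exp v} := by
  rintro _ ⟨⟨s, hs, rfl⟩, hs'⟩
  rcases hs.1.eq_or_lt with rfl | hu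
  · exact .inl rfl
  rcases hs.2.eq_or_lt with rfl | hv
  · exact .inr rfl
  exact absurd ⟨s, ⟨hu, hv⟩, rfl⟩ hs'

theorem exp_image_Icc_subset_inter_smul_inv (a b c d θ : ℝ) :
    exp '' Icc (max a (θ - d)) (min b (θ - c)) ⊆ exp '' Icc a b ∩ exp θ • (exp '' Icc c d)⁻¹ := by
  rintro _ ⟨s, ⟨hs₁, hs₂⟩, rfl⟩
  rw [max_le_iff] at hs₁
  rw [le_min_iff] at hs₂
  refine ⟨⟨s, ⟨hs₁.1, hs₂.1⟩, rfl⟩, mem_smul_set_iff_inv_smul_mem.2 ⟨θ - s, ⟨?_, ?_⟩, ?_⟩⟩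
  · linarith
  · linarith
  · rw [exp_sub, smul_eq_mul, mul_inv_rev, inv_inv, div_eq_inv_mul]

local instance : Fact (0 < 2 * Real.pi) := ⟨Real.two_pi_pos⟩

variable (mT : Measure Circle) [mT.IsHaarMeasure] [IsProbabilityMeasure mT]

theorem map_homeomorphCircle'_haarAddCircle :
    (AddCircle.haarAddCircle : Measure (AddCircle (2 * Real.pi))).map
      AddCircle.homeomorphCircle' = mT := by
  set e : AddCircle (2 * Real.pi) ≃ₜ Circle := AddCircle.homeomorphCircle'
  set ν : Measure (AddCircle (2 * Real.pi)) := AddCircle.haarAddCircle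
  have : IsProbabilityMeasure (ν.map e) :=
    Measure.isProbabilityMeasure_map e.continuous.aemeasurable
  have : (ν.map e).IsMulLeftInvariant := by
    refine ⟨fun g ↦ ?_⟩
    have hcomm : (g * ·) ∘ e = e ∘ (e.symm g + ·) := by
      funext z
      rw [comp_apply, comp_apply,
        show e (e.symm g + z) = e (e.symm g) * e z from Real.Angle.toCircle_add _ _,
        e.apply_symm_apply]
    rw [Measure.map_map (continuous_const_mul g).measurable e.continuous.measurable, hcomm,
      ← Measure.map_map e.continuous.measurable (continuous_const_add _).measurable,
      map_add_left_eq_self]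
  have : (ν.map e).IsHaarMeasure :=
    { toIsOpenPosMeasure := e.continuous.isOpenPosMeasure_map e.surjective }
  exact Measure.isHaarMeasure_eq_of_isProbabilityMeasure _ _

theorem measure_exp_image_Icc (u v : ℝ) :
    mT (exp '' Icc u v) = ENNReal.ofReal (min 1 ((v - u) / (2 * Real.pi))) := by
  have himage : exp '' Icc u v
      = AddCircle.homeomorphCircle' '' (((↑) : ℝ → AddCircle (2 * Real.pi)) '' Icc u v) := by
    rw [image_image]; rfl
  rw [← map_homeomorphCircle'_haarAddCircle mT, himage, ← Homeomorph.toMeasurableEquiv_coe,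
    MeasurableEquiv.map_apply, MeasurableEquiv.preimage_image,
    AddCircle.haarAddCircle_coe_image_Icc]

theorem measure_exp_image_Icc_pos_iff {u v : ℝ} : 0 < mT (exp '' Icc u v) ↔ u < v := by
  rw [measure_exp_image_Icc, ENNReal.ofReal_pos, lt_min_iff, div_pos_iff_of_pos_right
    Real.two_pi_pos, sub_pos]
  simp

theorem measure_exp_image_Icc_sdiff_Ioo (u v : ℝ) :
    mT (exp '' Icc u v \ exp '' Ioo u v) = 0 := by
  have hpt (w : ℝ) : mT {exp w} = 0 := by simpa using measure_exp_image_Icc mT w w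
  refine measure_mono_null (exp_image_Icc_sdiff_Ioo_subset u v) ?_
  rw [insert_eq]
  exact measure_union_null (hpt u) (hpt v)

theorem measure_exp_image_Icc_inter_smul_inv_pos {a b c d θ : ℝ} (hab : a < b) (hcd : c < d)
    (hθ : θ ∈ Ioo (a + c) (b + d)) :
    0 < mT (exp '' Icc a b ∩ exp θ • (exp '' Icc c d)⁻¹) := by
  refine lt_of_lt_of_le ?_ (measure_mono (exp_image_Icc_subset_inter_smul_inv a b c d θ))
  rw [measure_exp_image_Icc_pos_iff]
  exact max_lt (lt_min hab (by linarith [hθ.1])) (lt_min (by linarith [hθ.2]) (by linarith))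

theorem measure_exp_image_Icc_add {a b c d : ℝ} (hab : a ≤ b) (hba : b - a ≤ 2 * Real.pi)
    (hcd : c ≤ d) (hdc : d - c ≤ 2 * Real.pi) :
    mT (exp '' Icc (a + c) (b + d)) = min 1 (mT (exp '' Icc a b) + mT (exp '' Icc c d)) := by
  have hπ := Real.two_pi_pos
  rw [measure_exp_image_Icc, measure_exp_image_Icc, measure_exp_image_Icc,
    min_eq_right ((div_le_one hπ).2 hba), min_eq_right ((div_le_one hπ).2 hdc),
    ← ENNReal.ofReal_add (div_nonneg (sub_nonneg.2 hab) hπ.le)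
      (div_nonneg (sub_nonneg.2 hcd) hπ.le), ← ENNReal.ofReal_one, ← ENNReal.ofReal_min]
  ring_nf

end Circle

theorem conull_interval_pullbacks_critical_general
    {G : Type*} [Group G] [TopologicalSpace G] [IsTopologicalGroup G] [CompactSpace G]
    [MeasurableSpace G] [BorelSpace G]
    (mG : Measure G) [mG.IsHaarMeasure] [IsProbabilityMeasure mG]
    (mT : Measure Circle) [mT.IsHaarMeasure] [IsProbabilityMeasure mT]
    (p : G →* Circle) (hpc : Continuous p) (hps : Function.Surjective p)
    (I J : Set Circle) (hI : IsClosedArc I) (hJ : IsClosedArc J)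
    (hIpos : 0 < mT I) (hJpos : 0 < mT J)
    (A B : Set G)
    (hAI : A ⊆ ⇑p ⁻¹' I) (hAco : mG (⇑p ⁻¹' I \ A) = 0)
    (hBJ : B ⊆ ⇑p ⁻¹' J) (hBco : mG (⇑p ⁻¹' J \ B) = 0) :
    mG A = mT I ∧ mG B = mT J ∧ mG (A * B) = min 1 (mG A + mG B) := by
  obtain ⟨a, b, hab, hba, rfl⟩ := hI
  obtain ⟨c, d, hcd, hdc, rfl⟩ := hJ
  have hp : MeasurePreserving p mG mT := p.measurePreserving hpc hps (by simp)
  have hpre (u v : ℝ) : mG (p ⁻¹' (Circle.exp '' Icc u v)) = mT (Circle.exp '' Icc u v) :=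
    hp.measure_preimage
      (Circle.isCompact_exp_image_Icc u v).isClosed.measurableSet.nullMeasurableSet
  have hA := (measure_eq_measure_of_null_sdiff hAI hAco).trans (hpre a b)
  have hB := (measure_eq_measure_of_null_sdiff hBJ hBco).trans (hpre c d)
  have := mG.isInvInvariant_of_compactSpace
  have hlower : p ⁻¹' (Circle.exp '' Ioo (a + c) (b + d)) ⊆ A * B := by
    rintro x ⟨θ, hθ, hpx⟩
    exact p.preimage_singleton_subset_mul hp hAco hBco
      (Circle.measurableSet_exp_image_Icc_inter_smul_inv a b c d _).nullMeasurableSet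
      (Circle.measure_exp_image_Icc_inter_smul_inv_pos mT
        ((Circle.measure_exp_image_Icc_pos_iff mT).1 hIpos)
        ((Circle.measure_exp_image_Icc_pos_iff mT).1 hJpos) hθ) hpx.symm
  have hupper : A * B ⊆ p ⁻¹' (Circle.exp '' Icc (a + c) (b + d)) :=
    (mul_subset_mul hAI hBJ).trans <| (preimage_mul_preimage_subset p).trans <|
      preimage_mono (Circle.exp_image_Icc_mul_subset a b c d)
  have hAB : mG (A * B) = mT (Circle.exp '' Icc (a + c) (b + d)) := by
    refine (measure_eq_measure_larger_of_between_null_sdiff hlower hupper ?_).trans (hpre _ _)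
    rw [← preimage_sdiff]
    exact hp.quasiMeasurePreserving.preimage_null (Circle.measure_exp_image_Icc_sdiff_Ioo mT _ _)
  rw [hAB, hA, hB]
  exact ⟨rfl, rfl, Circle.measure_exp_image_Icc_add mT hab hba hcd hdc⟩

/-- conull subsets of pullbacks of closed intervals under a
continuous surjective homomorphism onto the circle form a critical pair. -/
theorem conull_interval_pullbacks_critical
    {G : Type*} [Group G] [TopologicalSpace G] [IsTopologicalGroup G] [CompactSpace G]
    [T2Space G] [MeasurableSpace G] [BorelSpace G]
    (mG : Measure G) [mG.IsHaarMeasure] [IsProbabilityMeasure mG]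
    (mT : Measure Circle) [mT.IsHaarMeasure] [IsProbabilityMeasure mT]
    (p : G →* Circle) (hpc : Continuous p) (hps : Function.Surjective p)
    (I J : Set Circle) (hI : IsClosedArc I) (hJ : IsClosedArc J)
    (hIpos : 0 < mT I) (hJpos : 0 < mT J)
    (A B : Set G) (hAmeas : MeasurableSet A) (hBmeas : MeasurableSet B)
    (hAI : A ⊆ ⇑p ⁻¹' I) (hAco : mG (⇑p ⁻¹' I \ A) = 0)
    (hBJ : B ⊆ ⇑p ⁻¹' J) (hBco : mG (⇑p ⁻¹' J \ B) = 0) :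
    mG A = mT I ∧ mG B = mT J ∧ mG (A * B) = min 1 (mG A + mG B) :=
  conull_interval_pullbacks_critical_general mG mT p hpc hps I J hI hJ hIpos hJpos A B hAI hAco hBJ
    hBco
end
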